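/- arXiv:2009.10544 — 2 statements merged into one kernel-verified Lean document; each statement's English description precedes it below -/
import Mathlib

section
/- Let G be a countable group acting continuously on a compact metric space X, and let μ be a probability measure on G whose support S is finite and generates G. Assume (i) μ is evenly distributed: for all n, m ∈ ℕ there is μ_{n,m} ∈ [0,1] such that μ^{*n}({g}) = μ_{n,m} for every g ∈ G with ‖g‖_S = m; and (ii) the action of G on X converges in word metric to the space average of a Borel probability measure ν: for every continuous f : X → ℝ and every x ∈ X, lim_{n→∞} (1/|G_n|) Σ_{g ∈ G_n} f(gx) = ∫_X f dν. Then ν is μ-stationary: μ * ν = ν. -/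
/-!
Fix `x : X` and let `σₙ = μ^{*n} * δₓ`. Evenness makes `μ^{*n}` uniform on every sphere `G_m`, so
`∫ f dσₙ` is the average of the sphere averages of `g ↦ f (g • x)`, weighted by the masses
`μ^{*n}(G_m)`. The spheres are eventually nonempty, so the submonoid generated by `S` is infinite,
and then the Cesàro means of `μ^{*n}{g}` tend to `0`: along any ultrafilter they converge to a
summable `μ`-harmonic function, which by the maximum principle is constant on an infinite set
where it attains its maximum, hence zero. So the Cesàro means of the `σₙ` lose the mass of every
ball and converge weakly to `ν`. Since `σₙ₊₁ = μ * σₙ` and `f ↦ ∫ f (g • ·) dμ(g)` preserves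
bounded continuous functions, the Krylov–Bogolyubov argument gives `μ * ν = ν`.
-/

open MeasureTheory Filter Topology

noncomputable section

namespace RWalk

variable {G : Type*} [Group G] [MeasurableSpace G]

/-- The `n`-fold convolution power of a measure on a group, with `μ^{*0} = δ_e`. -/
def convPow (μ : Measure G) : ℕ → Measure G
  | 0 => Measure.dirac 1
  | n + 1 => (convPow μ n).mconv μ

/-- The word length of `g` with respect to a generating set `S`:
`‖g‖_S = min {n | g = s₁ ⋯ s_n, sᵢ ∈ S}`. -/
def wordLen (S : Set G) (g : G) : ℕ :=
  sInf {n | ∃ l : List G, l.length = n ∧ (∀ s ∈ l, s ∈ S) ∧ l.prod = g}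

/-- Convolution `μ * ν` of a measure `μ` on `G` with a measure `ν` on a `G`-space `X`:
the pushforward of `μ ⊗ ν` under the action map `(g,x) ↦ g • x`. -/
def actConv {X : Type*} [MeasurableSpace X] [MulAction G X]
    (μ : Measure G) (ν : Measure X) : Measure X :=
  Measure.map (fun p : G × X => p.1 • p.2) (μ.prod ν)

end RWalk

open RWalk

open scoped BigOperators BoundedContinuousFunction ENNReal

namespace RWalk

section Cesaro

def cesaro (u : ℕ → ℝ) (N : ℕ) : ℝ := 𝔼 n ∈ Finset.range (N + 1), u n

lemma cesaro_succ_sub_cesaro (u : ℕ → ℝ) (N : ℕ) :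
    cesaro (fun n => u (n + 1)) N - cesaro u N = (u (N + 1) - u 0) / (N + 1) := by
  simp only [cesaro, Finset.expect_eq_sum_div_card, Finset.card_range, ← sub_div]
  rw [Finset.sum_range_succ (fun n => u (n + 1)) N, Finset.sum_range_succ' u N]
  push_cast
  ring

lemma tendsto_cesaro_succ_sub_cesaro {u : ℕ → ℝ} {C : ℝ} (hu : ∀ n, |u n| ≤ C) :
    Tendsto (fun N => cesaro (fun n => u (n + 1)) N - cesaro u N) atTop (𝓝 0) := by
  have hlim : Tendsto (fun N : ℕ => 2 * C / ((N : ℝ) + 1)) atTop (𝓝 0) :=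
    tendsto_const_nhds.div_atTop (tendsto_natCast_atTop_atTop.atTop_add tendsto_const_nhds)
  refine squeeze_zero_norm (fun N => ?_) hlim
  rw [cesaro_succ_sub_cesaro, Real.norm_eq_abs, abs_div,
    abs_of_pos (show (0 : ℝ) < N + 1 by positivity)]
  gcongr
  linarith [abs_sub (u (N + 1)) (u 0), hu (N + 1), hu 0]

lemma abs_cesaro_sub_le {u v : ℕ → ℝ} {T : ℝ} (h : ∀ n, |u n - T| ≤ v n) (N : ℕ) :
    |cesaro u N - T| ≤ cesaro v N := by
  have hne : (Finset.range (N + 1)).Nonempty := Finset.nonempty_range_add_one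
  calc |cesaro u N - T| = |𝔼 n ∈ Finset.range (N + 1), (u n - T)| := by
        rw [Finset.expect_sub_distrib, Finset.expect_const hne, cesaro]
    _ ≤ 𝔼 n ∈ Finset.range (N + 1), |u n - T| := Finset.abs_expect_le _ _
    _ ≤ cesaro v N := Finset.expect_le_expect fun n _ => h n

lemma abs_integral_comp_sub_le {Ω : Type*} [MeasurableSpace Ω] {ρ : Measure Ω}
    [IsProbabilityMeasure ρ] {ℓ : Ω → ℕ} (hℓ : Measurable ℓ) {a : ℕ → ℝ} {T C δ : ℝ} {M : ℕ}
    (hC : ∀ m, |a m - T| ≤ C) (hδ : 0 ≤ δ) (hM : ∀ m, M ≤ m → |a m - T| ≤ δ) :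
    |∫ ω, a (ℓ ω) ∂ρ - T| ≤ C * ρ.real {ω | ℓ ω < M} + δ := by
  have hball : MeasurableSet {ω | ℓ ω < M} := hℓ measurableSet_Iio
  have hdom : ∀ ω, ‖a (ℓ ω) - T‖ ≤ C * {ω | ℓ ω < M}.indicator 1 ω + δ := by
    intro ω
    by_cases hω : ℓ ω < M
    · simp only [Set.indicator_of_mem (show ω ∈ {ω | ℓ ω < M} from hω), Pi.one_apply, mul_one,
        Real.norm_eq_abs]
      linarith [hC (ℓ ω)]
    · simpa [Set.indicator_of_notMem (show ω ∉ {ω | ℓ ω < M} from hω)] using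
        hM (ℓ ω) (not_lt.1 hω)
  have hind : Integrable (fun ω => C * {ω | ℓ ω < M}.indicator (1 : Ω → ℝ) ω) ρ :=
    ((integrable_const (1 : ℝ)).indicator hball).const_mul C
  have hia : Integrable (fun ω => a (ℓ ω)) ρ :=
    Integrable.of_bound (Measurable.of_discrete.comp hℓ).aestronglyMeasurable (C + |T|)
      (ae_of_all _ fun ω => by
        rw [Real.norm_eq_abs]
        linarith [abs_sub_abs_le_abs_sub (a (ℓ ω)) T, hC (ℓ ω)])
  calc |∫ ω, a (ℓ ω) ∂ρ - T| = ‖∫ ω, (a (ℓ ω) - T) ∂ρ‖ := by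
        simp [integral_sub hia (integrable_const T)]
    _ ≤ ∫ ω, (C * {ω | ℓ ω < M}.indicator 1 ω + δ) ∂ρ :=
        norm_integral_le_of_norm_le (hind.add (integrable_const _)) (ae_of_all _ hdom)
    _ = C * ρ.real {ω | ℓ ω < M} + δ := by
        rw [integral_add hind (integrable_const _), integral_const_mul,
          integral_indicator_one hball]
        simp

theorem tendsto_cesaro_integral_of_tendsto {Ω : Type*} [MeasurableSpace Ω] {ρ : ℕ → Measure Ω}
    [∀ n, IsProbabilityMeasure (ρ n)] {ℓ : Ω → ℕ} (hℓ : Measurable ℓ)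
    (hρ : ∀ M, Tendsto (cesaro fun n => (ρ n).real {ω | ℓ ω < M}) atTop (𝓝 0))
    {a : ℕ → ℝ} {T : ℝ} (ha : Tendsto a atTop (𝓝 T)) :
    Tendsto (cesaro fun n => ∫ ω, a (ℓ ω) ∂ρ n) atTop (𝓝 T) := by
  obtain ⟨C, hC⟩ : ∃ C, ∀ m, |a m - T| ≤ C := by
    obtain ⟨C, hC⟩ := (Metric.isBounded_range_of_tendsto _ (ha.sub_const T)).exists_norm_le
    exact ⟨C, fun m => hC _ ⟨m, rfl⟩⟩
  rw [Metric.tendsto_nhds]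
  intro ε hε
  obtain ⟨M, hM⟩ := eventually_atTop.1 ((Metric.tendsto_nhds.1 ha) (ε / 2) (by positivity))
  have hbound : ∀ n, |∫ ω, a (ℓ ω) ∂ρ n - T| ≤ C * (ρ n).real {ω | ℓ ω < M} + ε / 2 :=
    fun n => abs_integral_comp_sub_le hℓ hC (by positivity) fun m hm =>
      (Real.dist_eq (a m) T ▸ hM m hm).le
  have hsmall : ∀ᶠ N in atTop, C * cesaro (fun n => (ρ n).real {ω | ℓ ω < M}) N < ε / 2 := by
    have := (hρ M).const_mul C
    rw [mul_zero] at this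
    exact this.eventually (gt_mem_nhds (by positivity))
  filter_upwards [hsmall] with N hN
  rw [Real.dist_eq]
  calc |cesaro (fun n => ∫ ω, a (ℓ ω) ∂ρ n) N - T|
      ≤ cesaro (fun n => C * (ρ n).real {ω | ℓ ω < M} + ε / 2) N := abs_cesaro_sub_le hbound N
    _ = C * cesaro (fun n => (ρ n).real {ω | ℓ ω < M}) N + ε / 2 := by
        rw [cesaro, Finset.expect_add_distrib, Finset.expect_const Finset.nonempty_range_add_one,
          ← Finset.mul_expect, cesaro]
    _ < ε := by linarith

end Cesaro

section Liouville

variable {G : Type*} [Group G] {S : Finset G} {p L : G → ℝ}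

lemma apply_inv_mul_eq_of_forall_le (hp : ∀ k ∈ S, 0 < p k) (hp1 : ∑ k ∈ S, p k = 1)
    (hharm : ∀ g, L g = ∑ k ∈ S, p k * L (k⁻¹ * g)) {g₀ : G} (hmax : ∀ g, L g ≤ L g₀)
    {g : G} (hg : L g = L g₀) {k : G} (hk : k ∈ S) : L (k⁻¹ * g) = L g₀ := by
  have hle : ∀ j ∈ S, p j * L (j⁻¹ * g) ≤ p j * L g₀ :=
    fun j hj => mul_le_mul_of_nonneg_left (hmax _) (hp j hj).le
  have hsum : ∑ j ∈ S, p j * L (j⁻¹ * g) = ∑ j ∈ S, p j * L g₀ := by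
    rw [← hharm, hg, ← Finset.sum_mul, hp1, one_mul]
  exact mul_left_cancel₀ (hp k hk).ne' ((Finset.sum_eq_sum_iff_of_le hle).1 hsum k hk)

lemma apply_inv_mul_eq_of_mem_closure (hp : ∀ k ∈ S, 0 < p k) (hp1 : ∑ k ∈ S, p k = 1)
    (hharm : ∀ g, L g = ∑ k ∈ S, p k * L (k⁻¹ * g)) {g₀ : G} (hmax : ∀ g, L g ≤ L g₀)
    {t : G} (ht : t ∈ Submonoid.closure (S : Set G)) : L (t⁻¹ * g₀) = L g₀ := by
  suffices ∀ g, L g = L g₀ → L (t⁻¹ * g) = L g₀ from this g₀ rfl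
  induction ht using Submonoid.closure_induction with
  | mem k hk => exact fun g hg => apply_inv_mul_eq_of_forall_le hp hp1 hharm hmax hg hk
  | one => simp
  | mul x y _ _ hx hy =>
    intro g hg
    rw [mul_inv_rev, mul_assoc]
    exact hy _ (hx g hg)

theorem eq_zero_of_summable_of_harmonic (hp : ∀ k ∈ S, 0 < p k) (hp1 : ∑ k ∈ S, p k = 1)
    (hS : (Submonoid.closure (S : Set G) : Set G).Infinite) (hL0 : 0 ≤ L) (hL : Summable L)
    (hharm : ∀ g, L g = ∑ k ∈ S, p k * L (k⁻¹ * g)) : L = 0 := by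
  by_contra hne
  obtain ⟨g', hg'⟩ := Function.ne_iff.1 hne
  have hpos : 0 < L g' := (hL0 g').lt_of_ne' hg'
  have hfin : {g | L g' ≤ L g}.Finite := by
    simpa using Filter.eventually_cofinite.1
      (hL.tendsto_cofinite_zero.eventually (gt_mem_nhds hpos))
  obtain ⟨g₀, hg₀, hmax₀⟩ := Set.exists_max_image _ L hfin ⟨g', le_refl (L g')⟩
  have hmax : ∀ g, L g ≤ L g₀ := fun g =>
    (le_or_gt (L g') (L g)).elim (hmax₀ g) fun h => h.le.trans hg₀
  refine (hS.image (mul_left_injective g₀ |>.comp inv_injective).injOn).mono ?_ hfin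
  rintro _ ⟨t, ht, rfl⟩
  exact hg₀.trans (apply_inv_mul_eq_of_mem_closure hp hp1 hharm hmax ht).ge

end Liouville

section ConvPow

variable {G : Type*} [Group G] [MeasurableSpace G]

instance isProbabilityMeasure_convPow [MeasurableMul₂ G] (μ : Measure G) [IsProbabilityMeasure μ]
    (n : ℕ) : IsProbabilityMeasure (convPow μ n) := by
  induction n with
  | zero => exact Measure.dirac.isProbabilityMeasure
  | succ n ih => exact Measure.probabilitymeasure_of_probabilitymeasures_mconv (convPow μ n) μ

lemma convPow_succ' [MeasurableMul₂ G] (μ : Measure G) [IsProbabilityMeasure μ] (n : ℕ) :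
    convPow μ (n + 1) = μ ∗ₘ convPow μ n := by
  induction n with
  | zero => exact (Measure.dirac_one_mconv μ).trans (Measure.mconv_dirac_one μ).symm
  | succ n ih =>
    change convPow μ (n + 1) ∗ₘ μ = μ ∗ₘ (convPow μ n ∗ₘ μ)
    rw [ih, Measure.mconv_assoc]

variable [Countable G] [MeasurableSingletonClass G]

lemma mconv_apply_singleton (μ ρ : Measure G) [SFinite ρ] (g : G) :
    (μ ∗ₘ ρ) {g} = ∑' k, μ {k} * ρ {k⁻¹ * g} := by
  rw [Measure.mconv, Measure.map_apply measurable_mul (measurableSet_singleton g),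
    Measure.prod_apply (measurable_mul (measurableSet_singleton g)), lintegral_countable']
  refine tsum_congr fun k => ?_
  rw [mul_comm]
  congr 2
  ext h
  simp [eq_inv_mul_iff_mul_eq]

variable {μ : Measure G} [IsProbabilityMeasure μ] {S : Finset G}

lemma measureReal_convPow_succ_singleton (hμ : ∀ k ∉ S, μ {k} = 0) (n : ℕ) (g : G) :
    (convPow μ (n + 1)).real {g} = ∑ k ∈ S, μ.real {k} * (convPow μ n).real {k⁻¹ * g} := by
  rw [convPow_succ', measureReal_def, mconv_apply_singleton,
    tsum_eq_sum fun k hk => by rw [hμ k hk, zero_mul],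
    ENNReal.toReal_sum fun k _ => ENNReal.mul_ne_top (measure_ne_top _ _) (measure_ne_top _ _)]
  simp only [ENNReal.toReal_mul, measureReal_def]

lemma convPow_compl_closure_eq_zero (hμ : ∀ k ∉ S, μ {k} = 0) (n : ℕ) :
    convPow μ n (Submonoid.closure (S : Set G) : Set G)ᶜ = 0 := by
  rw [measure_null_iff_singleton (Set.to_countable _)]
  induction n with
  | zero =>
    intro g hg
    have hg1 : (1 : G) ∉ ({g} : Set G) := fun h => hg (h ▸ one_mem _)
    simp [convPow, hg1]
  | succ n ih =>
    intro g hg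
    rw [convPow_succ', mconv_apply_singleton, ENNReal.tsum_eq_zero]
    intro k
    by_cases hk : k ∈ S
    · refine mul_eq_zero_of_right _ (ih _ fun hkg => hg ?_)
      simpa using mul_mem (Submonoid.subset_closure hk) hkg
    · rw [hμ k hk, zero_mul]

lemma sum_cesaro_convPow_le_one (F : Finset G) (N : ℕ) :
    ∑ g ∈ F, cesaro (fun n => (convPow μ n).real {g}) N ≤ 1 := by
  simp only [cesaro, ← Finset.expect_sum_comm]
  refine Finset.expect_le Finset.nonempty_range_add_one fun n _ => ?_
  rw [sum_measureReal_singleton]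
  exact measureReal_le_one

lemma tendsto_cesaro_convPow_sub_harmonic (hμ : ∀ k ∉ S, μ {k} = 0) (g : G) :
    Tendsto (fun N => cesaro (fun n => (convPow μ n).real {g}) N -
      ∑ k ∈ S, μ.real {k} * cesaro (fun n => (convPow μ n).real {k⁻¹ * g}) N) atTop (𝓝 0) := by
  have hstep : ∀ N, ∑ k ∈ S, μ.real {k} * cesaro (fun n => (convPow μ n).real {k⁻¹ * g}) N =
      cesaro (fun n => (convPow μ (n + 1)).real {g}) N := by
    intro N
    simp only [cesaro, Finset.mul_expect, ← Finset.expect_sum_comm,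
      measureReal_convPow_succ_singleton hμ]
  simp only [hstep]
  have hbound : ∀ n, |(convPow μ n).real {g}| ≤ 1 := fun n => by
    rw [abs_of_nonneg measureReal_nonneg]
    exact measureReal_le_one
  simpa using (tendsto_cesaro_succ_sub_cesaro hbound).neg

theorem tendsto_cesaro_convPow_singleton (hS : ∀ g, μ {g} ≠ 0 ↔ g ∈ S)
    (hinf : (Submonoid.closure (S : Set G) : Set G).Infinite) (g : G) :
    Tendsto (cesaro fun n => (convPow μ n).real {g}) atTop (𝓝 0) := by
  have hμ : ∀ k ∉ S, μ {k} = 0 := fun k hk => not_not.1 (mt (hS k).1 hk)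
  set v : ℕ → G → ℝ := fun N g => cesaro (fun n => (convPow μ n).real {g}) N
  have hv : ∀ N g, v N g ∈ Set.Icc (0 : ℝ) 1 := fun N g =>
    ⟨Finset.expect_nonneg fun n _ => measureReal_nonneg,
      by simpa using sum_cesaro_convPow_le_one (μ := μ) {g} N⟩
  -- Along an ultrafilter the Cesàro means converge pointwise to a summable harmonic function.
  rw [tendsto_iff_ultrafilter]
  intro U hU
  have hlim : ∀ g, ∃ L ∈ Set.Icc (0 : ℝ) 1, Tendsto (fun N => v N g) U (𝓝 L) := fun g =>
    isCompact_Icc.ultrafilter_le_nhds (U.map fun N => v N g)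
      (le_principal_iff.2 (Ultrafilter.mem_map.2 (Eventually.of_forall fun N => hv N g)))
  choose L hL01 hL using hlim
  have hL0 : L = 0 := by
    refine eq_zero_of_summable_of_harmonic (p := fun k => μ.real {k})
      (fun k hk => ENNReal.toReal_pos ((hS k).2 hk) (measure_ne_top _ _)) ?_ hinf
      (fun g => (hL01 g).1) ?_ fun g => ?_
    · have hSc : μ (S : Set G)ᶜ = 0 :=
        (measure_null_iff_singleton (Set.to_countable _)).2 fun k hk => hμ k hk
      rw [sum_measureReal_singleton, measureReal_def,
        (prob_compl_eq_zero_iff S.measurableSet).1 hSc, ENNReal.toReal_one]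
    · refine summable_of_sum_le (c := 1) (fun g => (hL01 g).1) fun F => ?_
      exact le_of_tendsto (tendsto_finsetSum F fun g _ => hL g)
        (Eventually.of_forall fun N => sum_cesaro_convPow_le_one F N)
    · have h := (hL g).sub (tendsto_finsetSum S fun k _ => (hL (k⁻¹ * g)).const_mul
        (μ.real {k}))
      have h0 := (tendsto_cesaro_convPow_sub_harmonic hμ g).mono_left hU
      exact sub_eq_zero.1 (tendsto_nhds_unique h h0)
  simpa [hL0] using hL g

theorem tendsto_cesaro_measureReal_convPow_of_finite (hS : ∀ g, μ {g} ≠ 0 ↔ g ∈ S)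
    (hinf : (Submonoid.closure (S : Set G) : Set G).Infinite) {F : Set G} (hF : F.Finite) :
    Tendsto (cesaro fun n => (convPow μ n).real F) atTop (𝓝 0) := by
  lift F to Finset G using hF
  simp only [← sum_measureReal_singleton]
  have hsum : (cesaro fun n => ∑ g ∈ F, (convPow μ n).real {g}) =
      fun N => ∑ g ∈ F, cesaro (fun n => (convPow μ n).real {g}) N :=
    funext fun N => Finset.expect_sum_comm _ _ _
  rw [hsum]
  simpa using tendsto_finsetSum F fun g _ => tendsto_cesaro_convPow_singleton hS hinf g

end ConvPow

section WordLength

variable {G : Type*} [Group G] {S : Set G} {g : G}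

lemma exists_list_length_eq_wordLen (hg : g ∈ Submonoid.closure S) :
    ∃ l : List S, l.length = wordLen S g ∧ (l.map (↑)).prod = g := by
  obtain ⟨l, hlS, hl⟩ := Submonoid.exists_list_of_mem_closure hg
  have hmem : wordLen S g ∈ {n | ∃ l : List G, l.length = n ∧ (∀ s ∈ l, s ∈ S) ∧ l.prod = g} :=
    Nat.sInf_mem ⟨l.length, l, rfl, hlS, hl⟩
  obtain ⟨l', hlen, hl'S, hl'⟩ := hmem
  lift l' to List S using hl'S
  exact ⟨l', by simpa using hlen, hl'⟩

-- `wordLen S g = 0` also for every `g` outside the submonoid generated by `S`, as `sInf ∅ = 0`.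
lemma mem_closure_of_wordLen_ne_zero (hg : wordLen S g ≠ 0) : g ∈ Submonoid.closure S := by
  obtain ⟨n, l, -, hlS, rfl⟩ :
      {n | ∃ l : List G, l.length = n ∧ (∀ s ∈ l, s ∈ S) ∧ l.prod = g}.Nonempty :=
    Nat.nonempty_of_pos_sInf (Nat.pos_of_ne_zero hg)
  exact Submonoid.list_prod_mem _ fun s hs => Submonoid.subset_closure (hlS s hs)

lemma finite_setOf_wordLen_lt_inter_closure (hS : S.Finite) (M : ℕ) :
    ({g | wordLen S g < M} ∩ Submonoid.closure S).Finite := by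
  have := hS.to_subtype
  refine ((List.finite_length_lt S M).image fun l => (l.map (↑)).prod).subset ?_
  rintro g ⟨hgM, hg⟩
  obtain ⟨l, hlen, rfl⟩ := exists_list_length_eq_wordLen hg
  exact ⟨l, (hlen ▸ hgM : l.length < M), rfl⟩

lemma infinite_closure_of_eventually_nonempty
    (h : ∀ᶠ n in atTop, {g : G | wordLen S g = n}.Nonempty) :
    (Submonoid.closure S : Set G).Infinite := by
  obtain ⟨N, hN⟩ := eventually_atTop.1 h
  refine Set.Infinite.of_image (wordLen S) ((Set.Ici_infinite (N + 1)).mono fun n hn => ?_)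
  obtain ⟨g, hg⟩ := hN n (Nat.le_of_succ_le hn)
  have hgn : wordLen S g = n := hg
  exact ⟨g, mem_closure_of_wordLen_ne_zero (hgn ▸ Nat.ne_zero_of_lt hn), hg⟩

end WordLength

section SetAverage

variable {α : Type*}

-- `ncard` vanishes on infinite sets, so the average over an infinite (or empty) set is `0`.
def setAverage (A : Set α) (φ : α → ℝ) : ℝ := (∑ᶠ a ∈ A, φ a) / A.ncard

lemma abs_setAverage_le {A : Set α} {φ : α → ℝ} {C : ℝ} (hC : 0 ≤ C) (hφ : ∀ a, |φ a| ≤ C) :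
    |setAverage A φ| ≤ C := by
  rcases A.finite_or_infinite with hA | hA
  · lift A to Finset α using hA
    rw [setAverage, finsum_mem_coe_finset, Set.ncard_coe_finset, abs_div, Nat.abs_cast]
    refine div_le_of_le_mul₀ (Nat.cast_nonneg _) hC ?_
    calc |∑ a ∈ A, φ a| ≤ ∑ a ∈ A, |φ a| := Finset.abs_sum_le_sum_abs _ _
      _ ≤ ∑ _a ∈ A, C := Finset.sum_le_sum fun a _ => hφ a
      _ = C * A.card := by rw [Finset.sum_const, nsmul_eq_mul, mul_comm]
  · simpa [setAverage, hA.ncard] using hC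

variable [MeasurableSpace α] [Countable α] [MeasurableSingletonClass α] {ρ : Measure α}
  [IsFiniteMeasure ρ]

lemma setIntegral_eq_measureReal_mul_setAverage {A : Set α}
    (hA : ∀ a ∈ A, ∀ b ∈ A, ρ {a} = ρ {b}) (φ : α → ℝ) :
    ∫ a in A, φ a ∂ρ = ρ.real A * setAverage A φ := by
  rcases A.finite_or_infinite with hfin | hinf
  · lift A to Finset α using hfin
    rw [setIntegral_finset _ IntegrableOn.finset, setAverage, finsum_mem_coe_finset,
      Set.ncard_coe_finset, ← sum_measureReal_singleton]
    rcases A.eq_empty_or_nonempty with rfl | ⟨a₀, ha₀⟩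
    · simp
    have hc : ∀ a ∈ A, ρ.real {a} = ρ.real {a₀} := fun a ha => by
      rw [measureReal_def, measureReal_def, hA a ha a₀ ha₀]
    rw [Finset.sum_congr rfl hc, Finset.sum_congr rfl fun a ha => by rw [smul_eq_mul, hc a ha],
      Finset.sum_const, ← Finset.mul_sum, nsmul_eq_mul]
    field_simp [Finset.card_ne_zero.2 ⟨a₀, ha₀⟩]
  · -- Infinitely many atoms of equal mass in a finite measure are null.
    have h0 : ρ A = 0 := by
      refine (measure_null_iff_singleton A.to_countable).2 fun a ha => ?_
      by_contra hne
      have := hinf.to_subtype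
      refine measure_ne_top ρ A ?_
      calc ρ A = ∑' b : A, ρ {(b : α)} := (tsum_measure_preimage_singleton A.to_countable
            (f := id) fun _ _ => measurableSet_singleton _).symm
        _ = ⊤ := by
          rw [tsum_congr fun b : A => hA b b.2 a ha]
          exact ENNReal.tsum_const_eq_top_of_ne_zero hne
    rw [Measure.restrict_eq_zero.2 h0, integral_zero_measure, measureReal_def, h0,
      ENNReal.toReal_zero, zero_mul]

theorem integral_eq_integral_setAverage {β : Type*} [Countable β] {ℓ : α → β}
    (hρ : ∀ a b, ℓ a = ℓ b → ρ {a} = ρ {b}) {φ : α → ℝ} {C : ℝ} (hφ : ∀ a, |φ a| ≤ C) :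
    ∫ a, φ a ∂ρ = ∫ a, setAverage {b | ℓ b = ℓ a} φ ∂ρ := by
  have hφ' : ∀ a, |φ a| ≤ max C 0 := fun a => (hφ a).trans (le_max_left _ _)
  set s : β → Set α := fun b => ℓ ⁻¹' {b}
  have hs : ∀ b, MeasurableSet (s b) := fun b => .of_discrete
  have hU : ⋃ b, s b = Set.univ := Set.iUnion_eq_univ_iff.2 fun a => ⟨ℓ a, rfl⟩
  have hsum : ∀ ψ : α → ℝ, (∀ a, |ψ a| ≤ max C 0) → ∫ a, ψ a ∂ρ = ∑' b, ∫ a in s b, ψ a ∂ρ := by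
    intro ψ hψ
    rw [← setIntegral_univ, ← hU, integral_iUnion hs (pairwise_disjoint_fiber ℓ)
      (Integrable.of_bound Measurable.of_discrete.aestronglyMeasurable _
        (ae_of_all _ hψ)).integrableOn]
  rw [hsum φ hφ', hsum _ fun a => abs_setAverage_le (le_max_right _ _) hφ']
  refine tsum_congr fun b => ?_
  have hconst : ∀ a ∈ s b, setAverage {c | ℓ c = ℓ a} φ = setAverage (s b) φ := by
    intro a ha
    have hab : ℓ a = b := ha
    simp only [hab]
    rfl
  rw [setIntegral_eq_measureReal_mul_setAverage (fun a ha a' ha' => hρ a a' (ha.trans ha'.symm)),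
    setIntegral_congr_fun (hs b) hconst, setIntegral_const, smul_eq_mul]

end SetAverage

theorem tendsto_cesaro_integral_convPow {G : Type*} [Group G] [Countable G] [MeasurableSpace G]
    [MeasurableSingletonClass G] {μ : Measure G} [IsProbabilityMeasure μ] {S : Finset G}
    (hS : ∀ g, μ {g} ≠ 0 ↔ g ∈ S)
    (heven : ∀ n m : ℕ, ∃ c, ∀ g : G, wordLen (S : Set G) g = m → convPow μ n {g} = c)
    (hinf : (Submonoid.closure (S : Set G) : Set G).Infinite) {φ : G → ℝ} {C : ℝ}
    (hφ : ∀ g, |φ g| ≤ C) {T : ℝ}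
    (hlim : Tendsto (fun m => setAverage {g | wordLen (S : Set G) g = m} φ) atTop (𝓝 T)) :
    Tendsto (cesaro fun n => ∫ g, φ g ∂convPow μ n) atTop (𝓝 T) := by
  have hfiber : (fun n => ∫ g, φ g ∂convPow μ n) = fun n =>
      ∫ g, setAverage {h | wordLen (S : Set G) h = wordLen (S : Set G) g} φ ∂convPow μ n := by
    refine funext fun n => integral_eq_integral_setAverage (fun a b hab => ?_) hφ
    obtain ⟨c, hc⟩ := heven n (wordLen (S : Set G) a)
    rw [hc a rfl, hc b hab.symm]
  rw [hfiber]
  refine tendsto_cesaro_integral_of_tendsto (ℓ := wordLen (S : Set G))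
    (a := fun m => setAverage {g | wordLen (S : Set G) g = m} φ) Measurable.of_discrete
    (fun M => ?_) hlim
  have hμ : ∀ k ∉ S, μ {k} = 0 := fun k hk => not_not.1 (mt (hS k).1 hk)
  have hball : ∀ n, (convPow μ n).real {g | wordLen (S : Set G) g < M} =
      (convPow μ n).real ({g | wordLen (S : Set G) g < M} ∩ Submonoid.closure (S : Set G)) :=
    fun n => by
      rw [measureReal_def, measureReal_def,
        measure_inter_conull (convPow_compl_closure_eq_zero hμ n)]
  simp only [hball]
  exact tendsto_cesaro_measureReal_convPow_of_finite hS hinf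
    (finite_setOf_wordLen_lt_inter_closure S.finite_toSet M)

section Action

variable {G X : Type*} [Group G] [MeasurableSpace G] [MeasurableSpace X] [MulAction G X]
  [MeasurableSMul₂ G X]

lemma measurable_smul_prod : Measurable fun p : G × X => p.1 • p.2 :=
  measurable_fst.smul measurable_snd

instance isProbabilityMeasure_actConv (μ : Measure G) [IsProbabilityMeasure μ] (ν : Measure X)
    [IsProbabilityMeasure ν] : IsProbabilityMeasure (actConv μ ν) :=
  Measure.isProbabilityMeasure_map measurable_smul_prod.aemeasurable

lemma lintegral_actConv (μ : Measure G) (ν : Measure X) [SFinite ν] {f : X → ℝ≥0∞}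
    (hf : Measurable f) : ∫⁻ y, f y ∂actConv μ ν = ∫⁻ g, ∫⁻ y, f (g • y) ∂ν ∂μ := by
  rw [actConv, lintegral_map hf measurable_smul_prod,
    lintegral_prod (fun p : G × X => f (p.1 • p.2)) (hf.comp measurable_smul_prod).aemeasurable]

lemma actConv_mconv [MeasurableMul₂ G] (μ ρ : Measure G) [IsProbabilityMeasure ρ] (ν : Measure X)
    [IsProbabilityMeasure ν] : actConv (μ ∗ₘ ρ) ν = actConv μ (actConv ρ ν) := by
  refine Measure.ext_of_lintegral _ fun f hf => ?_
  have hF : Measurable fun g : G => ∫⁻ y, f (g • y) ∂ν :=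
    (hf.comp measurable_smul_prod).lintegral_prod_right'
  rw [lintegral_actConv _ _ hf, lintegral_actConv _ _ hf, Measure.lintegral_mconv hF]
  refine lintegral_congr fun k => ?_
  rw [lintegral_actConv _ _ (f := fun y => f (k • y)) (hf.comp (measurable_const_smul k))]
  simp only [mul_smul]

lemma integral_actConv_dirac [TopologicalSpace X] [OpensMeasurableSpace X] (ρ : Measure G)
    [SFinite ρ] (x : X) (f : X →ᵇ ℝ) :
    ∫ y, f y ∂actConv ρ (Measure.dirac x) = ∫ g, f (g • x) ∂ρ := by
  rw [actConv, Measure.prod_dirac, Measure.map_map measurable_smul_prod measurable_prodMk_right,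
    integral_map (measurable_smul_prod.comp measurable_prodMk_right).aemeasurable
      f.continuous.aestronglyMeasurable]
  rfl

variable [Countable G] [MeasurableSingletonClass G] [TopologicalSpace X]
  [FirstCountableTopology X] [ContinuousConstSMul G X]

def markovOp (μ : Measure G) [IsProbabilityMeasure μ] (f : X →ᵇ ℝ) : X →ᵇ ℝ :=
  .ofNormedAddCommGroup (fun y => ∫ g, f (g • y) ∂μ)
    (continuous_of_dominated (fun _ => Measurable.of_discrete.aestronglyMeasurable)
      (fun _ => ae_of_all _ fun _ => f.norm_coe_le_norm _) (integrable_const ‖f‖)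
      (ae_of_all _ fun g => f.continuous.comp (continuous_const_smul g)))
    ‖f‖ fun y => by
      simpa using norm_integral_le_of_norm_le_const (μ := μ)
        (ae_of_all _ fun g => f.norm_coe_le_norm (g • y))

variable [OpensMeasurableSpace X]

lemma integral_actConv (μ : Measure G) [IsProbabilityMeasure μ] (ν : Measure X)
    [IsProbabilityMeasure ν] (f : X →ᵇ ℝ) :
    ∫ y, f y ∂actConv μ ν = ∫ y, markovOp μ f y ∂ν := by
  have hint : Integrable (fun p : G × X => f (p.1 • p.2)) (μ.prod ν) :=
    Integrable.of_bound (f.continuous.measurable.comp measurable_smul_prod).aestronglyMeasurable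
      ‖f‖ (ae_of_all _ fun p => f.norm_coe_le_norm _)
  rw [actConv, integral_map measurable_smul_prod.aemeasurable f.continuous.aestronglyMeasurable,
    integral_prod_symm _ hint]
  rfl

theorem actConv_eq_of_tendsto_cesaro [HasOuterApproxClosed X] [BorelSpace X] {μ : Measure G}
    [IsProbabilityMeasure μ] {ν : Measure X} [IsProbabilityMeasure ν] {σ : ℕ → Measure X}
    [∀ n, IsProbabilityMeasure (σ n)] (hσ : ∀ n, σ (n + 1) = actConv μ (σ n))
    (hlim : ∀ f : X →ᵇ ℝ, Tendsto (cesaro fun n => ∫ y, f y ∂σ n) atTop (𝓝 (∫ y, f y ∂ν))) :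
    actConv μ ν = ν := by
  refine ext_of_forall_integral_eq_of_IsFiniteMeasure fun f => ?_
  rw [integral_actConv]
  have hshift : Tendsto (cesaro fun n => ∫ y, markovOp μ f y ∂σ n) atTop (𝓝 (∫ y, f y ∂ν)) := by
    have hbound : ∀ n, |∫ y, f y ∂σ n| ≤ ‖f‖ := fun n => by
      simpa using norm_integral_le_of_norm_le_const (μ := σ n)
        (ae_of_all _ fun y => f.norm_coe_le_norm y)
    simpa [hσ, integral_actConv] using (tendsto_cesaro_succ_sub_cesaro hbound).add (hlim f)
  exact tendsto_nhds_unique (hlim (markovOp μ f)) hshift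

end Action

end RWalk

theorem word_limit_stationary_general {G : Type*} [Group G] [Countable G] [MeasurableSpace G]
    [MeasurableSingletonClass G]
    {X : Type*} [MetricSpace X] [MeasurableSpace X] [BorelSpace X]
    [MulAction G X] (hcont : ∀ g : G, Continuous fun x : X => g • x)
    (μ : Measure G) [IsProbabilityMeasure μ]
    (S : Finset G) (hsupp : ∀ g : G, μ {g} ≠ 0 ↔ g ∈ S)
    (heven : ∀ n m : ℕ, ∃ cnm : ENNReal,
      ∀ g : G, wordLen (S : Set G) g = m → convPow μ n {g} = cnm)
    (ν : Measure X) [IsProbabilityMeasure ν]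
    (hword : ∀ f : X → ℝ, Continuous f → ∀ x : X,
      Tendsto
        (fun n : ℕ =>
          (∑ᶠ g ∈ {g : G | wordLen (S : Set G) g = n}, f (g • x)) /
            (({g : G | wordLen (S : Set G) g = n}).ncard : ℝ))
        atTop (𝓝 (∫ y, f y ∂ν))) :
    actConv μ ν = ν := by
  have : ContinuousConstSMul G X := ⟨hcont⟩
  have : MeasurableSMul₂ G X :=
    ⟨measurable_from_prod_countable_right fun g => (hcont g).measurable⟩
  obtain ⟨x⟩ := nonempty_of_isProbabilityMeasure ν
  have hsphere : ∀ᶠ n in atTop, {g : G | wordLen (S : Set G) g = n}.Nonempty := by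
    -- For `f = 1` the sphere average is `1` on finite nonempty spheres and `0` otherwise.
    have h1 := hword (fun _ => 1) continuous_const x
    simp only [integral_const, probReal_univ, smul_eq_mul, mul_one] at h1
    filter_upwards [h1.eventually_ne one_ne_zero] with n hn
    by_contra hempty
    simp [Set.not_nonempty_iff_eq_empty.1 hempty] at hn
  refine actConv_eq_of_tendsto_cesaro (σ := fun n => actConv (convPow μ n) (Measure.dirac x))
    (fun n => by rw [convPow_succ', actConv_mconv]) fun f => ?_
  simp only [integral_actConv_dirac]
  exact tendsto_cesaro_integral_convPow hsupp heven
    (infinite_closure_of_eventually_nonempty hsphere)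
    (fun g => Real.norm_eq_abs _ ▸ f.norm_coe_le_norm (g • x)) (hword f f.continuous x)

/-- **Theorem (word-metric limits are stationary).** Let `G` be a countable group acting
continuously on a compact metric space `X`, and `μ` a probability measure on `G` whose
support `S` is finite and generates `G`.  If `μ` is evenly distributed (the `μ^{*n}`-mass of a
point depends only on its word length w.r.t. `S`) and the `G`-action converges in word metric
to the space average of a Borel probability measure `ν`, then `ν` is `μ`-stationary:
`μ * ν = ν`. -/
theorem word_limit_stationary {G : Type*} [Group G] [Countable G] [MeasurableSpace G]
    [MeasurableSingletonClass G]
    {X : Type*} [MetricSpace X] [CompactSpace X] [MeasurableSpace X] [BorelSpace X]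
    [MulAction G X] (hcont : ∀ g : G, Continuous fun x : X => g • x)
    (μ : Measure G) [IsProbabilityMeasure μ]
    (S : Finset G) (hsupp : ∀ g : G, μ {g} ≠ 0 ↔ g ∈ S)
    (hgen : Subgroup.closure (S : Set G) = ⊤)
    (heven : ∀ n m : ℕ, ∃ cnm : ENNReal,
      ∀ g : G, wordLen (S : Set G) g = m → convPow μ n {g} = cnm)
    (ν : Measure X) [IsProbabilityMeasure ν]
    (hword : ∀ f : X → ℝ, Continuous f → ∀ x : X,
      Tendsto
        (fun n : ℕ =>
          (∑ᶠ g ∈ {g : G | wordLen (S : Set G) g = n}, f (g • x)) /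
            (({g : G | wordLen (S : Set G) g = n}).ncard : ℝ))
        atTop (𝓝 (∫ y, f y ∂ν))) :
    actConv μ ν = ν :=
  word_limit_stationary_general hcont μ S hsupp heven ν hword
end
end

section
/- In the Farey group Γ with word metric with respect to {a,b,c}, the sphere Γ_n = {γ ∈ Γ : ‖γ‖ = n} satisfies |Γ_0| = 1 and |Γ_n| = 3·2^{n−1} for every integer n ≥ 1. -/
open scoped MatrixGroups OnePoint
open Matrix MeasureTheory Filter Topology

noncomputable section

namespace Farey

/-- Möbius action of a real 2×2 matrix on `ℝ ∪ {∞}`. -/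
def mobAux (M : Matrix (Fin 2) (Fin 2) ℝ) : OnePoint ℝ → OnePoint ℝ :=
  OnePoint.rec (if M 1 0 = 0 then ∞ else ((M 0 0 / M 1 0 : ℝ) : OnePoint ℝ))
    (fun r => if M 1 0 * r + M 1 1 = 0 then ∞
      else (((M 0 0 * r + M 0 1) / (M 1 0 * r + M 1 1) : ℝ) : OnePoint ℝ))

@[simp] lemma mobAux_infty (M : Matrix (Fin 2) (Fin 2) ℝ) :
    mobAux M ∞ = if M 1 0 = 0 then ∞ else ((M 0 0 / M 1 0 : ℝ) : OnePoint ℝ) := rfl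

@[simp] lemma mobAux_coe (M : Matrix (Fin 2) (Fin 2) ℝ) (r : ℝ) :
    mobAux M (r : OnePoint ℝ) = if M 1 0 * r + M 1 1 = 0 then ∞
      else (((M 0 0 * r + M 0 1) / (M 1 0 * r + M 1 1) : ℝ) : OnePoint ℝ) := rfl

lemma mobAux_neg (M : Matrix (Fin 2) (Fin 2) ℝ) : mobAux (-M) = mobAux M := by
  funext x
  induction x using OnePoint.rec with
  | infty => simp [Matrix.neg_apply, neg_eq_zero, neg_div_neg_eq]
  | coe r =>
      rw [mobAux_coe, mobAux_coe]
      have h1 : (-M) 1 0 * r + (-M) 1 1 = -(M 1 0 * r + M 1 1) := by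
        simp [Matrix.neg_apply]; ring
      have h0 : (-M) 0 0 * r + (-M) 0 1 = -(M 0 0 * r + M 0 1) := by
        simp [Matrix.neg_apply]; ring
      rw [h1, h0]
      simp only [neg_eq_zero, neg_div_neg_eq]

end Farey

namespace Farey

/-- Möbius action of an integral 2×2 special linear matrix on `ℝ ∪ {∞}`. -/
def mobSL (g : SL(2, ℤ)) : OnePoint ℝ → OnePoint ℝ :=
  mobAux ((g : Matrix (Fin 2) (Fin 2) ℤ).map (Int.cast : ℤ → ℝ))

lemma mobSL_mul_center (g z : SL(2, ℤ)) (hz : z ∈ Subgroup.center SL(2, ℤ)) :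
    mobSL (g * z) = mobSL g := by
  obtain ⟨r, hr, hscalar⟩ := Matrix.SpecialLinearGroup.mem_center_iff.mp hz
  have hr' : r = 1 ∨ r = -1 := by
    have : IsUnit r := IsUnit.of_mul_eq_one (a := r) (r ^ 1) (by
      simpa [pow_succ, Fintype.card_fin] using hr)
    exact Int.isUnit_iff.mp this
  rcases hr' with h1 | h1
  · have : z = 1 := by
      ext i j
      have := congrFun (congrFun hscalar i) j
      simp [h1] at this
      simp [← this]
    simp [this]
  · have hzmat : (z : Matrix (Fin 2) (Fin 2) ℤ) = -1 := by
      ext i j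
      have := congrFun (congrFun hscalar i) j
      simp [h1] at this
      simp [← this]
    unfold mobSL
    have : ((g * z : SL(2,ℤ)) : Matrix (Fin 2) (Fin 2) ℤ) = -(g : Matrix (Fin 2) (Fin 2) ℤ) := by
      rw [Matrix.SpecialLinearGroup.coe_mul, hzmat]
      simp
    rw [this]
    have hmap : ((-(g : Matrix (Fin 2) (Fin 2) ℤ)).map (Int.cast : ℤ → ℝ))
        = -(((g : Matrix (Fin 2) (Fin 2) ℤ)).map (Int.cast : ℤ → ℝ)) := by
      ext i j
      simp
    rw [hmap, mobAux_neg]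

/-- Möbius action of an element of `PSL(2,ℤ)` on `ℝ ∪ {∞}`. -/
def mob (x : PSL(2, ℤ)) : OnePoint ℝ → OnePoint ℝ :=
  Quotient.liftOn' x mobSL (by
    intro g h hgh
    have hmem : g⁻¹ * h ∈ Subgroup.center SL(2, ℤ) := QuotientGroup.leftRel_apply.mp hgh
    have : h = g * (g⁻¹ * h) := by group
    rw [this, mobSL_mul_center g _ hmem])

end Farey

namespace Farey

/-- The matrix `A = [[1,-2],[1,-1]]` as an element of `SL(2,ℤ)`. -/
def A : SL(2, ℤ) := ⟨!![1, -2; 1, -1], by norm_num [Matrix.det_fin_two_of]⟩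

/-- The matrix `B = [[0,-1],[1,0]]` as an element of `SL(2,ℤ)`. -/
def B : SL(2, ℤ) := ⟨!![0, -1; 1, 0], by norm_num [Matrix.det_fin_two_of]⟩

/-- The matrix `C = [[1,-1],[2,-1]]` as an element of `SL(2,ℤ)`. -/
def C : SL(2, ℤ) := ⟨!![1, -1; 2, -1], by norm_num [Matrix.det_fin_two_of]⟩

/-- The element `a ∈ PSL(2,ℤ)`. -/
def a : PSL(2, ℤ) := QuotientGroup.mk A

/-- The element `b ∈ PSL(2,ℤ)`. -/
def b : PSL(2, ℤ) := QuotientGroup.mk B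

/-- The element `c ∈ PSL(2,ℤ)`. -/
def c : PSL(2, ℤ) := QuotientGroup.mk C

/-- The Farey group: the subgroup of `PSL(2,ℤ)` generated by `a`, `b`, `c`. -/
def fareyGroup : Subgroup PSL(2, ℤ) := Subgroup.closure {a, b, c}

/-- The word length of an element of `PSL(2,ℤ)` with respect to the generators
`a`, `b`, `c` of the Farey group. -/
def wordLength (x : PSL(2, ℤ)) : ℕ :=
  sInf {n | ∃ l : List PSL(2, ℤ), l.length = n ∧ (∀ s ∈ l, s = a ∨ s = b ∨ s = c) ∧ l.prod = x}

/-- The sphere of radius `n` in the Farey group for the word metric w.r.t. `{a,b,c}`. -/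
def sphere (n : ℕ) : Set PSL(2, ℤ) := {x | x ∈ fareyGroup ∧ wordLength x = n}

end Farey

namespace Farey

/-- The mediant of two rationals, `p₁/q₁ ⊕ p₂/q₂ = (p₁+p₂)/(q₁+q₂)` (in lowest terms). -/
def mediant (p q : ℚ) : ℚ := ((p.num + q.num : ℤ) : ℚ) / (((p.den : ℤ) + (q.den : ℤ) : ℤ) : ℚ)

/-- Insert the mediant between every two consecutive entries of a list of rationals. -/
def insertMediants : List ℚ → List ℚ
  | p :: q :: rest => p :: mediant p q :: insertMediants (q :: rest)
  | l => l

/-- The Farey sequences: `F_0 = (0,1)`, and `F_{n+1}` is obtained from `F_n` by inserting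
mediants between consecutive terms. -/
def fareySeq : ℕ → List ℚ
  | 0 => [0, 1]
  | n + 1 => insertMediants (fareySeq n)

/-- `p, q` are consecutive terms of the Farey sequence `F_n`. -/
def IsFareyPairIn (n : ℕ) (p q : ℚ) : Prop :=
  ∃ i : ℕ, (fareySeq n)[i]? = some p ∧ (fareySeq n)[i + 1]? = some q

/-- `p, q` form a Farey pair: they are consecutive terms of some Farey sequence. -/
def IsFareyPair (p q : ℚ) : Prop := ∃ n : ℕ, IsFareyPairIn n p q

/-- The `k`-th summand (`k = 0, 1, 2, …`) in the series defining Minkowski's question mark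
function: `(−1)^k 2^{−(a₁+⋯+a_{k+1})}` when the continued fraction expansion
`x = [a₀; a₁, a₂, …]` has at least `k+1` partial denominators and `0` otherwise. -/
def qmTerm (x : ℝ) (k : ℕ) : ℝ :=
  match (List.range (k + 1)).mapM (fun i => (GenContFract.of x).partDens.get? i) with
  | none => 0
  | some l => (-1 : ℝ) ^ k * (2 : ℝ) ^ (-(l.sum))

/-- Minkowski's question mark function on `[0,1]`:
`?(x) = 2 ∑_{k≥1} (−1)^{k+1} 2^{−(a₁+⋯+a_k)}` for `x = [0; a₁, a₂, …]`, `?(1) = 1`. -/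
def questionMark (x : ℝ) : ℝ := if x = 1 then 1 else 2 * ∑' k : ℕ, qmTerm x k

/-- The extended Minkowski function `M̄(q) = (1/3)(∑_{k=−∞}^{m−1} 2^{−|k|} + ?(q−m)·2^{−|m|})`
for `q ∈ [m, m+1]`. -/
def extM (q : ℝ) : ℝ :=
  (1 / 3) * ((∑' j : ℕ, (2 : ℝ) ^ (-|⌊q⌋ - 1 - (j : ℤ)|)) +
    questionMark (q - ⌊q⌋) * (2 : ℝ) ^ (-|⌊q⌋|))

instance : MeasurableSpace (OnePoint ℝ) := borel _
instance : BorelSpace (OnePoint ℝ) := ⟨rfl⟩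

/-- `μ` is the extended Minkowski measure: the Borel probability measure on `ℝ ∪ {∞}` giving
no mass to `{∞}` whose cumulative distribution function is the extended Minkowski function. -/
def IsExtMinkowskiMeasure (μ : Measure (OnePoint ℝ)) : Prop :=
  IsProbabilityMeasure μ ∧ μ {∞} = 0 ∧
    ∀ u v : ℝ, u ≤ v →
      μ ((fun r : ℝ => (r : OnePoint ℝ)) '' Set.Ico u v) = ENNReal.ofReal (extM v - extM u)

end Farey

open Farey

/-!
By ping-pong, `a`, `b`, `c` generate a free product of three groups of order `2`: acting on `ℤ²`,
each generator maps the union of the cones over two of the intervals `(1, ∞)`, `(-∞, 0)`, `(0, 1)`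
into the cone over the third, and `±1` preserves all three cones. So every element of
`Γ` is the product of exactly one reduced word (no two equal adjacent letters), its word length is
the length of that word, and `Γ_n` is in bijection with the `3 · 2^(n-1)` reduced words of
length `n ≥ 1`.
-/

section ReducedWords

open Finset List

variable (α : Type*) [Fintype α] [DecidableEq α]

def reducedWords : ℕ → Finset (List α)
  | 0 => {[]}
  | n + 1 => (reducedWords n).biUnion fun t =>
      (univ.filter fun i => ∀ j ∈ t.head?, i ≠ j).image (· :: t)

variable {α}

theorem mem_reducedWords {n : ℕ} {l : List α} :
    l ∈ reducedWords α n ↔ l.IsChain (· ≠ ·) ∧ l.length = n := by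
  induction n generalizing l with
  | zero => simp +contextual [reducedWords]
  | succ n ih =>
    cases l with
    | nil => simp [reducedWords]
    | cons i t => simp [reducedWords, ih, isChain_cons]; tauto

theorem card_reducedWords_succ (n : ℕ) :
    #(reducedWords α (n + 1)) = Fintype.card α * (Fintype.card α - 1) ^ n := by
  have cons_left_injective (t : List α) : Function.Injective (· :: t) :=
    fun _ _ h => (cons_eq_cons.1 h).1
  induction n with
  | zero => simp [reducedWords, card_image_of_injective _ (cons_left_injective [])]
  | succ n ih =>
    rw [reducedWords, card_biUnion, sum_congr rfl (g := fun _ => Fintype.card α - 1), sum_const, ih,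
      smul_eq_mul, pow_succ, mul_assoc]
    · intro t ht
      obtain ⟨j, t, rfl⟩ := exists_cons_of_length_eq_add_one (mem_reducedWords.1 ht).2
      simp [card_image_of_injective _ (cons_left_injective _), filter_ne']
    · intro t _ t' _ hne
      rw [Function.onFun, Finset.disjoint_left]
      simp only [mem_image]
      rintro _ ⟨i, -, rfl⟩ ⟨i', -, h⟩
      exact hne (cons_eq_cons.1 h).2.symm

end ReducedWords

section Involutions

open List

variable {α G : Type*} [Group G] {f : α → G}

theorem prod_map_reverse_of_mul_self (hf : ∀ i, f i * f i = 1) (l : List α) :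
    (l.reverse.map f).prod = (l.map f).prod⁻¹ := by
  have hinv : (·⁻¹) ∘ f = f := funext fun i => inv_eq_of_mul_eq_one_left (hf i)
  rw [prod_inv_reverse, List.map_map, hinv, map_reverse]

theorem exists_prod_map_eq_of_mem_closure (hf : ∀ i, f i * f i = 1) {x : G}
    (hx : x ∈ Subgroup.closure (Set.range f)) : ∃ w : List α, (w.map f).prod = x := by
  induction hx using Subgroup.closure_induction with
  | mem _ h => obtain ⟨i, rfl⟩ := h; exact ⟨[i], by simp⟩
  | one => exact ⟨[], rfl⟩
  | mul _ _ _ _ h h' =>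
    obtain ⟨w, rfl⟩ := h
    obtain ⟨w', rfl⟩ := h'
    exact ⟨w ++ w', by simp⟩
  | inv _ _ h => obtain ⟨w, rfl⟩ := h; exact ⟨w.reverse, prod_map_reverse_of_mul_self hf w⟩

theorem exists_isChain_ne_prod_map_eq (hf : ∀ i, f i * f i = 1) :
    ∀ l : List α, ∃ l' : List α, l'.IsChain (· ≠ ·) ∧ l'.length ≤ l.length ∧
      (l'.map f).prod = (l.map f).prod
  | [] => ⟨[], .nil, le_rfl, rfl⟩
  | i :: t => by
    obtain ⟨t', ht', hlen, hprod⟩ := exists_isChain_ne_prod_map_eq hf t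
    by_cases h : t'.head? = some i
    · obtain ⟨t'', rfl⟩ : ∃ t'', t' = i :: t'' := by simpa [head?_eq_some_iff] using h
      refine ⟨t'', ht'.tail, by simp at hlen ⊢; omega, ?_⟩
      rw [map_cons, prod_cons, ← hprod, map_cons, prod_cons, ← mul_assoc, hf, one_mul]
    · refine ⟨i :: t', ht'.cons ?_, by simpa, by simp [hprod]⟩
      rintro j hj rfl
      exact h hj

theorem eq_of_prod_map_eq (hf : ∀ i, f i * f i = 1)
    (hfree : ∀ l : List α, l ≠ [] → l.IsChain (· ≠ ·) → (l.map f).prod ≠ 1) :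
    ∀ {l l' : List α}, l.IsChain (· ≠ ·) → l'.IsChain (· ≠ ·) →
      (l.map f).prod = (l'.map f).prod → l = l'
  | [], [], _, _, _ => rfl
  | [], _ :: _, _, hc', h => (hfree _ (cons_ne_nil _ _) hc' h.symm).elim
  | _ :: _, [], hc, _, h => (hfree _ (cons_ne_nil _ _) hc h).elim
  | i :: t, j :: t', hc, hc', h => by
    by_cases hij : i = j
    · subst hij
      rw [map_cons, prod_cons, map_cons, prod_cons, mul_right_inj] at h
      exact congrArg (i :: ·) (eq_of_prod_map_eq hf hfree hc.tail hc'.tail h)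
    · -- `(i :: t).reverse ++ j :: t'` is then a nonempty reduced word with product `1`.
      refine (hfree ((i :: t).reverse ++ j :: t') (by simp) ?_ ?_).elim
      · refine (isChain_reverse.2 (hc.imp fun _ _ => Ne.symm)).append hc' ?_
        simpa [getLast?_reverse] using hij
      · rw [map_append, prod_append, prod_map_reverse_of_mul_self hf, h, inv_mul_cancel]

theorem length_le_of_prod_map_eq (hf : ∀ i, f i * f i = 1)
    (hfree : ∀ l : List α, l ≠ [] → l.IsChain (· ≠ ·) → (l.map f).prod ≠ 1)
    {l w : List α} (hl : l.IsChain (· ≠ ·)) (h : (w.map f).prod = (l.map f).prod) :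
    l.length ≤ w.length := by
  obtain ⟨w', hw', hlen, hprod⟩ := exists_isChain_ne_prod_map_eq hf w
  rwa [← eq_of_prod_map_eq hf hfree hw' hl (hprod.trans h)]

end Involutions

section PingPong

open Function

variable {α G X : Type*} [Group G] [MulAction G X] {f : α → G} {P : α → Set X}

theorem prod_map_smul_mem_of_pingpong (hping : ∀ i j, i ≠ j → ∀ x ∈ P j, f i • x ∈ P i) :
    ∀ {i : α} {t : List α} {j : α}, (i :: t).IsChain (· ≠ ·) →
      (i :: t).getLast (List.cons_ne_nil i t) ≠ j → ∀ x ∈ P j, ((i :: t).map f).prod • x ∈ P i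
  | i, [], j, _, hij, x, hx => by simpa using hping i j hij x hx
  | i, i' :: t, j, hc, hj, x, hx => by
    rw [List.isChain_cons_cons] at hc
    rw [List.map_cons, List.prod_cons, mul_smul]
    exact hping i i' hc.1 _ (prod_map_smul_mem_of_pingpong hping hc.2 hj x hx)

theorem prod_map_notMem_of_pingpong (hping : ∀ i j, i ≠ j → ∀ x ∈ P j, f i • x ∈ P i)
    (hdisj : Pairwise (Disjoint on P)) (hne : ∀ i, (P i).Nonempty)
    (havoid : ∀ i j : α, ∃ k, k ≠ i ∧ k ≠ j) {S : Set G} (hS : ∀ g ∈ S, ∀ i, ∀ x ∈ P i, g • x ∈ P i)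
    {l : List α} (hl : l ≠ []) (hc : l.IsChain (· ≠ ·)) : (l.map f).prod ∉ S := by
  obtain ⟨i, t, rfl⟩ := List.exists_cons_of_ne_nil hl
  obtain ⟨k, hki, hkl⟩ := havoid i ((i :: t).getLast (List.cons_ne_nil i t))
  obtain ⟨x, hx⟩ := hne k
  exact fun hS' => Set.disjoint_left.1 (hdisj hki) (hS _ hS' k x hx)
    (prod_map_smul_mem_of_pingpong hping hc hkl.symm x hx)

end PingPong

namespace Farey

open Function Matrix.SpecialLinearGroup

def genSL : Fin 3 → SL(2, ℤ) := ![A, B, C]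

def gen (i : Fin 3) : PSL(2, ℤ) := QuotientGroup.mk (genSL i)

lemma range_gen : Set.range gen = {a, b, c} := by
  ext x
  simp [Fin.exists_fin_succ, gen, genSL, a, b, c, eq_comm]

lemma gen_mul_self (i : Fin 3) : gen i * gen i = 1 := by
  rw [gen, ← QuotientGroup.mk_mul, QuotientGroup.eq_one_iff, mem_center_iff]
  refine ⟨-1, by norm_num, ?_⟩
  fin_cases i <;> decide

/-- In the coordinate `x = v 0 / v 1` of the projective line, `0 < form i v` says that `x` lies in
`(1, ∞)`, `(-∞, 0)`, `(0, 1)` for `i = 0, 1, 2`. -/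
def form : Fin 3 → (Fin 2 → ℤ) → ℤ :=
  ![fun v => v 0 * v 1 - v 1 ^ 2, fun v => -(v 0 * v 1), fun v => v 0 * v 1 - v 0 ^ 2]

def cone (i : Fin 3) : Set (Fin 2 → ℤ) := {v | 0 < form i v}

lemma form_genSL_smul (i : Fin 3) (v : Fin 2 → ℤ) : form i (genSL i • v) = -form i v := by
  rw [Matrix.SpecialLinearGroup.smul_def]
  fin_cases i <;> simp [form, genSL, A, B, C, dotProduct, Fin.sum_univ_two] <;> ring

lemma form_neg_of_pos {i j : Fin 3} (hij : i ≠ j) {v : Fin 2 → ℤ} (hv : 0 < form j v) :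
    form i v < 0 := by
  fin_cases i <;> fin_cases j <;> simp [form] at hij hv ⊢ <;> nlinarith [sq_nonneg (v 0 - v 1)]

lemma form_smul_of_mem_center {g : SL(2, ℤ)} (hg : g ∈ Subgroup.center SL(2, ℤ)) (i : Fin 3)
    (v : Fin 2 → ℤ) : form i (g • v) = form i v := by
  obtain ⟨r, hr, hgr⟩ := mem_center_iff.1 hg
  have hsmul : g • v = r • v := by
    rw [Matrix.SpecialLinearGroup.smul_def, ← hgr]
    simp
  have hr : r ^ 2 = 1 := by simpa using hr
  have hform : form i (r • v) = r ^ 2 * form i v := by fin_cases i <;> simp [form] <;> ring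
  rw [hsmul, hform, hr, one_mul]

lemma genSL_smul_mem_cone {i j : Fin 3} (hij : i ≠ j) {v : Fin 2 → ℤ} (hv : v ∈ cone j) :
    genSL i • v ∈ cone i :=
  (neg_pos.2 (form_neg_of_pos hij hv)).trans_eq (form_genSL_smul i v).symm

lemma pairwise_disjoint_cone : Pairwise (Disjoint on cone) :=
  fun _ _ hij => Set.disjoint_left.2 fun _ hi hj => (form_neg_of_pos hij hj).not_gt hi

lemma cone_nonempty (i : Fin 3) : (cone i).Nonempty := by
  fin_cases i
  exacts [⟨![2, 1], by norm_num [cone, form]⟩, ⟨![-1, 1], by norm_num [cone, form]⟩,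
    ⟨![1, 2], by norm_num [cone, form]⟩]

lemma prod_map_gen_ne_one (l : List (Fin 3)) (hl : l ≠ []) (hc : l.IsChain (· ≠ ·)) :
    (l.map gen).prod ≠ 1 := by
  have hprod : (l.map gen).prod = QuotientGroup.mk (l.map genSL).prod := by
    rw [← QuotientGroup.mk'_apply, map_list_prod, List.map_map]; rfl
  rw [hprod, Ne, QuotientGroup.eq_one_iff]
  refine prod_map_notMem_of_pingpong (fun _ _ hij _ => genSL_smul_mem_cone hij)
    pairwise_disjoint_cone cone_nonempty (by decide) ?_ hl hc
  intro g hg i v hv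
  exact hv.trans_eq (form_smul_of_mem_center hg i v).symm

lemma fareyGroup_eq : fareyGroup = Subgroup.closure (Set.range gen) := by
  rw [range_gen, fareyGroup]

lemma wordLength_prod_map_gen {l : List (Fin 3)} (hl : l.IsChain (· ≠ ·)) :
    wordLength (l.map gen).prod = l.length := by
  have hgen : ∀ s ∈ l.map gen, s = a ∨ s = b ∨ s = c := by
    intro s hs
    obtain ⟨i, -, rfl⟩ := List.mem_map.1 hs
    show gen i ∈ ({a, b, c} : Set _)
    exact range_gen ▸ Set.mem_range_self i
  refine le_antisymm (Nat.sInf_le ⟨_, List.length_map .., hgen, rfl⟩) ?_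
  refine le_csInf ⟨_, _, rfl, hgen, rfl⟩ ?_
  rintro n ⟨s, rfl, hs, hprod⟩
  obtain ⟨w, rfl⟩ : s ∈ Set.range (List.map gen) := by
    rw [Set.range_list_map, range_gen]
    exact hs
  simpa using length_le_of_prod_map_eq gen_mul_self prod_map_gen_ne_one hl hprod

lemma sphere_eq_image (n : ℕ) :
    sphere n = (fun l : List (Fin 3) => (l.map gen).prod) '' (reducedWords (Fin 3) n) := by
  ext x
  constructor
  · rintro ⟨hx, rfl⟩
    rw [fareyGroup_eq] at hx
    obtain ⟨w, rfl⟩ := exists_prod_map_eq_of_mem_closure gen_mul_self hx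
    obtain ⟨l, hl, -, hprod⟩ := exists_isChain_ne_prod_map_eq gen_mul_self w
    exact ⟨l, mem_reducedWords.2 ⟨hl, by rw [← hprod, wordLength_prod_map_gen hl]⟩, hprod⟩
  · rintro ⟨l, hl, rfl⟩
    obtain ⟨hc, rfl⟩ := mem_reducedWords.1 hl
    refine ⟨list_prod_mem ?_, wordLength_prod_map_gen hc⟩
    simpa [fareyGroup_eq] using fun i _ => Subgroup.subset_closure (Set.mem_range_self i)

lemma ncard_sphere (n : ℕ) : (sphere n).ncard = (reducedWords (Fin 3) n).card := by
  rw [sphere_eq_image, Set.InjOn.ncard_image, Set.ncard_coe_finset]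
  intro l hl l' hl' h
  exact eq_of_prod_map_eq gen_mul_self prod_map_gen_ne_one (mem_reducedWords.1 hl).1
    (mem_reducedWords.1 hl').1 h

end Farey

/-- **Lemma (sphere counts).** In the Farey group with the word metric w.r.t. `{a,b,c}`,
the sphere `Γ_n = {γ ∈ Γ : ‖γ‖ = n}` satisfies `|Γ_0| = 1` and `|Γ_n| = 3·2^{n−1}` for
`n ≥ 1`. -/
theorem sphere_card :
    (sphere 0).ncard = 1 ∧ ∀ n : ℕ, 1 ≤ n → (sphere n).ncard = 3 * 2 ^ (n - 1) := by
  refine ⟨by rw [ncard_sphere, reducedWords, Finset.card_singleton], fun n hn => ?_⟩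
  obtain ⟨m, rfl⟩ := Nat.exists_eq_add_of_le' hn
  simp [ncard_sphere, card_reducedWords_succ]
end
end
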